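/- arXiv:1411.0132 — 5 statements merged into one kernel-verified Lean document; each statement's English description precedes it below -/
import Mathlib

section
/- Let G be a simple graph, f a signed k-submatching of G with f(E(G)) = β_S^k(G), and let G_1, …, G_ω be the connected components of G. Let A be a set of k vertices v with f(E_G(v)) ≤ 1, and let k_i = |V(G_i) ∩ A|. Then the restriction of f to each E(G_i) is an optimal signed k_i-submatching of G_i, i.e., f(E(G_i)) = β_S^{k_i}(G_i) for every i, and β_S^k(G) = Σ_i β_S^{k_i}(G_i). -/
open Finset

variable {V : Type*}

/-- Sum of `f` over all edges of `G`. -/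
noncomputable def edgeSum (G : SimpleGraph V) (f : Sym2 V → ℤ) : ℤ :=
  ∑ᶠ e ∈ G.edgeSet, f e

/-- Sum of `f` over all edges of `G` incident with `v`, i.e. `f(E_G(v))`. -/
noncomputable def vertexSum (G : SimpleGraph V) (f : Sym2 V → ℤ) (v : V) : ℤ :=
  ∑ᶠ e ∈ {e ∈ G.edgeSet | v ∈ e}, f e

/-- `f` is a signed `k`-submatching of `G`: it takes values `±1` on edges and
`f(E_G(v)) ≤ 1` for at least `k` vertices. -/
def IsSignedSubmatching (G : SimpleGraph V) (f : Sym2 V → ℤ) (k : ℕ) : Prop :=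
  (∀ e ∈ G.edgeSet, f e = 1 ∨ f e = -1) ∧ k ≤ {v | vertexSum G f v ≤ 1}.ncard

/-- The signed `k`-submatching number `β_S^k(G)`. -/
noncomputable def betaS (G : SimpleGraph V) (k : ℕ) : ℤ :=
  sSup {s : ℤ | ∃ f, IsSignedSubmatching G f k ∧ s = edgeSum G f}

/-! Edge sums split over the connected components, and the sum at a vertex only sees the
edges of its own component. So if `g` is an optimal signed `|C ∩ A|`-submatching of a
component `C`, the function equal to `g` on the edges of `C` and to `f` elsewhere
(`Function.extend (Sym2.map (↑)) g f`) still has at least `|A \ C| + |C ∩ A| = k` vertices with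
sum at most `1`, hence is a signed `k`-submatching of `G`. Optimality of `f` then gives
`f(E(C)) ≥ g(E(C)) = β_S^{|C ∩ A|}(C)`, and summing over the components gives `β_S^k(G)`. -/

lemma Sym2.range_map_subtype_val (s : Set V) : Set.range (Sym2.map ((↑) : s → V)) = s.sym2 := by
  rw [← Set.image_univ, ← Set.sym2_univ, ← Set.sym2_image, Set.image_univ, Subtype.range_coe]

lemma Set.disjoint_sym2 {s t : Set V} (h : Disjoint s t) : Disjoint s.sym2 t.sym2 := by
  rw [Set.disjoint_left]
  rintro ⟨a, b⟩ hs ht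
  exact Set.disjoint_left.mp h hs.1 ht.1

namespace SimpleGraph

variable (G : SimpleGraph V)

lemma edgeSet_induce (s : Set V) : (G.induce s).edgeSet = Sym2.map (↑) ⁻¹' G.edgeSet := by
  ext e
  induction e using Sym2.ind
  rfl

lemma image_val_edgeSet_induce (s : Set V) :
    Sym2.map (↑) '' (G.induce s).edgeSet = G.edgeSet ∩ s.sym2 := by
  rw [edgeSet_induce, Set.image_preimage_eq_inter_range, Sym2.range_map_subtype_val]

lemma incidenceSet_subset_sym2_supp {c : G.ConnectedComponent} {v : V} (hv : v ∈ c.supp) :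
    G.incidenceSet v ⊆ c.supp.sym2 := by
  rintro ⟨a, b⟩ ⟨hab, hv'⟩
  rcases Sym2.mem_iff.mp hv' with rfl | rfl
  · exact ⟨hv, c.mem_supp_of_adj_mem_supp hv hab⟩
  · exact ⟨c.mem_supp_of_adj_mem_supp hv hab.symm, hv⟩

lemma incidenceSet_induce (s : Set V) (v : s) :
    (G.induce s).incidenceSet v = Sym2.map (↑) ⁻¹' G.incidenceSet v := by
  ext e
  simp only [incidenceSet, edgeSet_induce, Set.preimage_ofPred_eq, Set.mem_ofPred_eq,
    Set.mem_preimage, Sym2.mem_map, Subtype.val_injective.eq_iff, exists_eq_right]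

lemma image_val_incidenceSet_induce_supp (c : G.ConnectedComponent) (v : c.supp) :
    Sym2.map (↑) '' (G.induce c.supp).incidenceSet v = G.incidenceSet v := by
  rw [incidenceSet_induce, Set.image_preimage_eq_inter_range, Sym2.range_map_subtype_val,
    Set.inter_eq_left.mpr (G.incidenceSet_subset_sym2_supp v.2)]

lemma iUnion_edgeSet_inter_sym2_supp :
    ⋃ c : G.ConnectedComponent, G.edgeSet ∩ c.supp.sym2 = G.edgeSet := by
  refine (Set.iUnion_subset fun _ => Set.inter_subset_left).antisymm fun e he => ?_
  induction e using Sym2.ind with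
  | _ a b =>
    exact Set.mem_iUnion.mpr ⟨G.connectedComponentMk a, he,
      G.incidenceSet_subset_sym2_supp rfl ⟨he, Sym2.mem_mk_left a b⟩⟩

end SimpleGraph

open SimpleGraph

section EdgeSums

variable (G : SimpleGraph V)

lemma vertexSum_eq_finsum_incidenceSet (g : Sym2 V → ℤ) (v : V) :
    vertexSum G g v = ∑ᶠ e ∈ G.incidenceSet v, g e :=
  rfl

lemma edgeSum_induce (s : Set V) (g : Sym2 V → ℤ) :
    edgeSum (G.induce s) (fun e => g (e.map (↑))) = ∑ᶠ e ∈ G.edgeSet ∩ s.sym2, g e := by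
  rw [← image_val_edgeSet_induce,
    finsum_mem_image (Sym2.map.injective Subtype.val_injective).injOn]
  rfl

lemma vertexSum_induce_supp (c : G.ConnectedComponent) (g : Sym2 V → ℤ) (v : c.supp) :
    vertexSum (G.induce c.supp) (fun e => g (e.map (↑))) v = vertexSum G g v := by
  rw [vertexSum_eq_finsum_incidenceSet, vertexSum_eq_finsum_incidenceSet,
    ← image_val_incidenceSet_induce_supp,
    finsum_mem_image (Sym2.map.injective Subtype.val_injective).injOn]

variable [Finite V]

lemma edgeSum_eq_edgeSum_induce_add (s : Set V) (g : Sym2 V → ℤ) :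
    edgeSum G g =
      edgeSum (G.induce s) (fun e => g (e.map (↑))) + ∑ᶠ e ∈ G.edgeSet \ s.sym2, g e := by
  rw [edgeSum_induce, edgeSum, finsum_mem_inter_add_sdiff _ (Set.toFinite _)]

lemma edgeSum_eq_finsum_connectedComponent (g : Sym2 V → ℤ) :
    edgeSum G g =
      ∑ᶠ c : G.ConnectedComponent, edgeSum (G.induce c.supp) (fun e => g (e.map (↑))) := by
  simp_rw [edgeSum_induce]
  rw [← finsum_mem_iUnion _ fun _ => Set.toFinite _, G.iUnion_edgeSet_inter_sym2_supp, edgeSum]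
  intro c d hcd
  exact (Set.disjoint_sym2 (G.pairwise_disjoint_supp_connectedComponent hcd)).mono
    Set.inter_subset_right Set.inter_subset_right

lemma edgeSum_le_ncard_edgeSet (g : Sym2 V → ℤ) (hg : ∀ e ∈ G.edgeSet, g e = 1 ∨ g e = -1) :
    edgeSum G g ≤ G.edgeSet.ncard := by
  have hfin := G.edgeSet.toFinite
  rw [edgeSum, finsum_mem_eq_finite_toFinset_sum _ hfin, Set.ncard_eq_toFinset_card _ hfin]
  simpa using Finset.sum_le_card_nsmul _ g 1 fun e he => by
    rcases hg e (hfin.mem_toFinset.mp he) with h | h <;> omega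

lemma bddAbove_edgeSum_isSignedSubmatching (k : ℕ) :
    BddAbove {s : ℤ | ∃ f, IsSignedSubmatching G f k ∧ s = edgeSum G f} := by
  refine ⟨G.edgeSet.ncard, ?_⟩
  rintro s ⟨f, hf, rfl⟩
  exact edgeSum_le_ncard_edgeSet G f hf.1

lemma IsSignedSubmatching.edgeSum_le_betaS {G : SimpleGraph V} {f : Sym2 V → ℤ} {k : ℕ}
    (hf : IsSignedSubmatching G f k) : edgeSum G f ≤ betaS G k :=
  le_csSup (bddAbove_edgeSum_isSignedSubmatching G k) ⟨f, hf, rfl⟩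

lemma IsSignedSubmatching.exists_edgeSum_eq_betaS {G : SimpleGraph V} {f : Sym2 V → ℤ} {k : ℕ}
    (hf : IsSignedSubmatching G f k) : ∃ g, IsSignedSubmatching G g k ∧ betaS G k = edgeSum G g :=
  Int.csSup_mem (s := {s : ℤ | ∃ f, IsSignedSubmatching G f k ∧ s = edgeSum G f})
    ⟨_, f, hf, rfl⟩ (bddAbove_edgeSum_isSignedSubmatching G k)

end EdgeSums

section Exchange

variable (G : SimpleGraph V) (f : Sym2 V → ℤ)

lemma extend_map_val_of_notMem_sym2 {s : Set V} (g : Sym2 s → ℤ) {e : Sym2 V}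
    (he : e ∉ s.sym2) : Function.extend (Sym2.map (↑)) g f e = f e :=
  Function.extend_apply' _ _ _ fun h => he (Sym2.range_map_subtype_val s ▸ h)

lemma vertexSum_extend_map_val_of_notMem {s : Set V} (g : Sym2 s → ℤ) {v : V} (hv : v ∉ s) :
    vertexSum G (Function.extend (Sym2.map (↑)) g f) v = vertexSum G f v := by
  refine finsum_mem_congr rfl fun e he => extend_map_val_of_notMem_sym2 f g fun hes => hv ?_
  induction e using Sym2.ind with
  | _ a b => rcases Sym2.mem_iff.mp he.2 with rfl | rfl <;> [exact hes.1; exact hes.2]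

lemma vertexSum_extend_map_val_of_mem (c : G.ConnectedComponent) (g : Sym2 c.supp → ℤ)
    (v : c.supp) :
    vertexSum G (Function.extend (Sym2.map (↑)) g f) v = vertexSum (G.induce c.supp) g v := by
  rw [← vertexSum_induce_supp G c]
  simp only [(Sym2.map.injective Subtype.val_injective).extend_apply]

lemma edgeSum_extend_map_val [Finite V] (s : Set V) (g : Sym2 s → ℤ) :
    edgeSum G (Function.extend (Sym2.map (↑)) g f) =
      edgeSum (G.induce s) g + ∑ᶠ e ∈ G.edgeSet \ s.sym2, f e := by
  rw [edgeSum_eq_edgeSum_induce_add G s,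
    finsum_mem_congr rfl fun e he => extend_map_val_of_notMem_sym2 f g he.2]
  simp only [(Sym2.map.injective Subtype.val_injective).extend_apply]

end Exchange

section Components

variable [Finite V] (G : SimpleGraph V) {f : Sym2 V → ℤ} {A : Set V}

theorem isSignedSubmatching_induce_supp
    (hsign : ∀ e ∈ G.edgeSet, f e = 1 ∨ f e = -1) (hA : A ⊆ {v | vertexSum G f v ≤ 1})
    (c : G.ConnectedComponent) :
    IsSignedSubmatching (G.induce c.supp) (fun e => f (e.map (↑))) (c.supp ∩ A).ncard := by
  refine ⟨fun e he => hsign _ ((G.edgeSet_induce _).subset he), ?_⟩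
  rw [← Subtype.image_preimage_coe, Set.ncard_image_of_injective _ Subtype.val_injective]
  refine Set.ncard_le_ncard (fun v hv => ?_) (Set.toFinite _)
  rw [Set.mem_ofPred_eq, vertexSum_induce_supp]
  exact hA hv

theorem isSignedSubmatching_extend_map_val
    (hsign : ∀ e ∈ G.edgeSet, f e = 1 ∨ f e = -1) (hA : A ⊆ {v | vertexSum G f v ≤ 1})
    {k : ℕ} (hk : k ≤ A.ncard) (c : G.ConnectedComponent) {g : Sym2 c.supp → ℤ}
    (hg : IsSignedSubmatching (G.induce c.supp) g (c.supp ∩ A).ncard) :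
    IsSignedSubmatching G (Function.extend (Sym2.map (↑)) g f) k := by
  constructor
  · intro e he
    by_cases hes : e ∈ c.supp.sym2
    · rw [← Sym2.range_map_subtype_val] at hes
      obtain ⟨e', rfl⟩ := hes
      rw [(Sym2.map.injective Subtype.val_injective).extend_apply]
      exact hg.1 e' ((G.edgeSet_induce _).superset he)
    · rw [extend_map_val_of_notMem_sym2 f g hes]
      exact hsign e he
  · set good := {v | vertexSum (G.induce c.supp) g v ≤ 1}
    have hdisj : Disjoint (A \ c.supp) ((↑) '' good) :=
      Set.disjoint_left.mpr fun _ hv ⟨w, _, hw⟩ => hv.2 (hw ▸ w.2)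
    have hsub : A \ c.supp ∪ (↑) '' good ⊆
        {v | vertexSum G (Function.extend (Sym2.map (↑)) g f) v ≤ 1} := by
      rintro v (⟨hvA, hvc⟩ | ⟨w, hw, rfl⟩)
      · rw [Set.mem_ofPred_eq, vertexSum_extend_map_val_of_notMem G f g hvc]
        exact hA hvA
      · rw [Set.mem_ofPred_eq, vertexSum_extend_map_val_of_mem G f c g w]
        exact hw
    calc k ≤ A.ncard := hk
      _ = (A \ c.supp).ncard + (c.supp ∩ A).ncard := by
        rw [add_comm, Set.inter_comm,
          Set.ncard_inter_add_ncard_sdiff_eq_ncard _ _ (Set.toFinite _)]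
      _ ≤ (A \ c.supp).ncard + ((↑) '' good : Set V).ncard := by
        rw [Set.ncard_image_of_injective _ Subtype.val_injective]
        exact Nat.add_le_add_left hg.2 _
      _ = (A \ c.supp ∪ (↑) '' good).ncard := (Set.ncard_union_eq hdisj).symm
      _ ≤ _ := Set.ncard_le_ncard hsub (Set.toFinite _)

theorem edgeSum_induce_supp_eq_betaS
    (hsign : ∀ e ∈ G.edgeSet, f e = 1 ∨ f e = -1) (hA : A ⊆ {v | vertexSum G f v ≤ 1})
    {k : ℕ} (hopt : edgeSum G f = betaS G k) (hk : k ≤ A.ncard) (c : G.ConnectedComponent) :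
    edgeSum (G.induce c.supp) (fun e => f (e.map (↑))) =
      betaS (G.induce c.supp) (c.supp ∩ A).ncard := by
  have hres := isSignedSubmatching_induce_supp G hsign hA c
  obtain ⟨g, hg, hβ⟩ := hres.exists_edgeSum_eq_betaS
  refine hres.edgeSum_le_betaS.antisymm ?_
  have hle := (isSignedSubmatching_extend_map_val G hsign hA hk c hg).edgeSum_le_betaS
  rw [← hopt, edgeSum_extend_map_val, edgeSum_eq_edgeSum_induce_add G c.supp f] at hle
  linarith

end Components

theorem optimal_restricts_to_components [Fintype V] (G : SimpleGraph V) (k : ℕ)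
    (f : Sym2 V → ℤ) (hf : IsSignedSubmatching G f k)
    (hopt : edgeSum G f = betaS G k)
    (A : Set V) (hA : A ⊆ {v | vertexSum G f v ≤ 1}) (hAcard : A.ncard = k) :
    (∀ c : G.ConnectedComponent,
      edgeSum (SimpleGraph.induce c.supp G) (fun e => f (e.map Subtype.val))
        = betaS (SimpleGraph.induce c.supp G) ((c.supp ∩ A).ncard)) ∧
    betaS G k
      = ∑ᶠ c : G.ConnectedComponent,
          betaS (SimpleGraph.induce c.supp G) ((c.supp ∩ A).ncard) := by
  have hcomp := edgeSum_induce_supp_eq_betaS G hf.1 hA hopt hAcard.ge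
  refine ⟨hcomp, ?_⟩
  rw [← hopt, edgeSum_eq_finsum_connectedComponent]
  exact finsum_congr hcomp
end

section
/- Let G be an Eulerian simple graph (connected, all degrees even) with m edges and n vertices. Then β_S^n(G) = 0 if m is even and β_S^n(G) = −1 if m is odd. -/
open Finset

variable {V : Type*}

/-!
Each vertex sum `f(E_G(v))` of a `±1`-signing has the parity of `deg v`, so in an Eulerian graph
`f(E_G(v)) ≤ 1` forces `f(E_G(v)) ≤ 0`; as `∑ v, f(E_G(v)) = 2 f(E(G))`, this gives `f(E(G)) ≤ 0`,
and `f(E(G)) ≡ m (mod 2)`. Conversely, sign the edges of an Eulerian circuit alternately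
`-1, 1, -1, …`: the two edges at each intermediate visit of a vertex cancel, so only the base
vertex gets a nonzero sum, `(-1) ^ m - 1`, and `f(E(G)) = ((-1) ^ m - 1) / 2`.
-/

theorem Finset.even_sum_sub_card {α : Type*} (s : Finset α) {f : α → ℤ}
    (hf : ∀ a ∈ s, f a = 1 ∨ f a = -1) : Even (∑ a ∈ s, f a - #s) := by
  rw [show ∑ a ∈ s, f a - #s = ∑ a ∈ s, (f a - 1) by simp [Finset.sum_sub_distrib]]
  exact Finset.even_sum _ fun a ha => by rcases hf a ha with h | h <;> simp [h]

namespace SimpleGraph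

variable {G : SimpleGraph V}

theorem exists_isTrail_forall_length_le [Fintype V] [Nonempty V] (G : SimpleGraph V) :
    ∃ (u v : V) (p : G.Walk u v), p.IsTrail ∧
      ∀ (u' v' : V) (q : G.Walk u' v'), q.IsTrail → q.length ≤ p.length := by
  classical
  let P (n : ℕ) : Prop := ∃ (u v : V) (p : G.Walk u v), p.IsTrail ∧ p.length = n
  have hbound {u v : V} {p : G.Walk u v} (hp : p.IsTrail) : p.length ≤ Fintype.card (Sym2 V) :=
    p.length_edges ▸ hp.edges_nodup.length_le_card
  obtain ⟨u⟩ := ‹Nonempty V›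
  have hnil : P 0 := ⟨u, u, .nil, by simp, rfl⟩
  obtain ⟨u, v, p, hp, hlen⟩ := Nat.findGreatest_spec (Nat.zero_le _) hnil
  exact ⟨u, v, p, hp, fun u' v' q hq =>
    hlen ▸ Nat.le_findGreatest (hbound hq) ⟨u', v', q, hq, rfl⟩⟩

theorem Walk.IsTrail.eq_of_forall_adj_mem_edges [Fintype V] [DecidableRel G.Adj] {u v : V}
    {p : G.Walk u v} (hp : p.IsTrail) (hu : Even (G.degree u))
    (hadj : ∀ y, G.Adj u y → s(u, y) ∈ p.edges) : u = v := by
  classical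
  have hincid : G.incidenceFinset u = (p.edges.filter (u ∈ ·)).toFinset := by
    ext e
    simp only [mem_incidenceFinset, List.mem_toFinset, List.mem_filter, decide_eq_true_eq]
    refine ⟨fun ⟨he, hue⟩ => ⟨?_, hue⟩, fun ⟨he, hue⟩ => ⟨p.edges_subset_edgeSet he, hue⟩⟩
    rw [← Sym2.other_spec hue] at he ⊢
    exact hadj _ he
  have hcount : p.edges.countP (u ∈ ·) = G.degree u := by
    rw [← card_incidenceFinset_eq_degree, hincid, List.toFinset_card_of_nodup
      (hp.edges_nodup.filter _), List.countP_eq_length_filter]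
  by_contra huv
  simpa [huv] using (hp.even_countP_edges_iff u).1 (hcount ▸ hu)

theorem Connected.exists_adj_not_mem_edges (hG : G.Connected) {u v : V} (p : G.Walk u v)
    {e : Sym2 V} (he : e ∈ G.edgeSet) (hep : e ∉ p.edges) :
    ∃ x ∈ p.support, ∃ y, G.Adj x y ∧ s(x, y) ∉ p.edges := by
  induction e with | _ a b => ?_
  by_cases ha : a ∈ p.support
  · exact ⟨a, ha, b, he, hep⟩
  obtain ⟨d, -, hd, hd'⟩ := (hG u a).some.exists_boundary_dart {x | x ∈ p.support}
    p.start_mem_support ha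
  exact ⟨d.fst, hd, d.snd, d.adj, fun h => hd' (p.snd_mem_support_of_mem_edges h)⟩

/-- Euler's theorem: a longest trail must start where it ends (by parity of the degree at its
start), and it covers every edge, since otherwise it could be rotated to a vertex incident with a
missing edge and prolonged by that edge. -/
theorem Connected.exists_isEulerian [Fintype V] [DecidableEq V] [DecidableRel G.Adj]
    (hG : G.Connected) (heven : ∀ v, Even (G.degree v)) :
    ∃ (u : V) (p : G.Walk u u), p.IsEulerian := by
  have := hG.nonempty
  obtain ⟨u, v, p, hp, hmax⟩ := G.exists_isTrail_forall_length_le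
  have huv : u = v := hp.eq_of_forall_adj_mem_edges (heven u) fun y hy => by
    by_contra hyp
    have := hmax _ _ (.cons hy.symm p) ((Walk.isTrail_cons _ _).2 ⟨hp, by rwa [Sym2.eq_swap]⟩)
    simp at this
  subst huv
  refine ⟨u, p, (Walk.isEulerian_iff p).2 ⟨hp, fun e he => ?_⟩⟩
  by_contra hep
  obtain ⟨x, hx, y, hxy, hxyp⟩ := hG.exists_adj_not_mem_edges p he hep
  have hrot := (p.rotate_edges x hx).perm
  have htrail : (Walk.cons hxy.symm (p.rotate x hx)).IsTrail := by
    rw [Walk.isTrail_cons, Sym2.eq_swap, hrot.mem_iff]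
    exact ⟨⟨hrot.nodup_iff.2 hp.edges_nodup⟩, hxyp⟩
  have := hmax _ _ _ htrail
  simp [Walk.length_rotate] at this

theorem Walk.sum_map_ite_mem_edges [DecidableEq V] {a b : V} (p : G.Walk a b) (v : V)
    {f : Sym2 V → ℤ} (c : ℤ) (hf : ∀ i (h : i < p.edges.length), f p.edges[i] = c * (-1) ^ i) :
    (p.edges.map fun e => if v ∈ e then f e else 0).sum =
      (if v = a then c else 0) - (if v = b then c * (-1) ^ p.length else 0) := by
  induction p generalizing c with
  | nil => simp
  | @cons a a' b hadj q ih =>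
    have hhead : f s(a, a') = c := by simpa using hf 0 (by simp)
    have htail := ih (-c) fun i hi => by
      simpa [pow_succ] using hf (i + 1) (by simpa using hi)
    have hne : a ≠ a' := hadj.ne
    simp only [Walk.edges_cons, List.map_cons, List.sum_cons, htail, hhead, Walk.length_cons,
      Sym2.mem_iff]
    by_cases hva : v = a <;> by_cases hva' : v = a' <;> simp_all [pow_succ] <;> ring

section Sums

variable [Fintype V] [DecidableRel G.Adj] (f : Sym2 V → ℤ)

theorem edgeSum_eq_sum_edgeFinset : edgeSum G f = ∑ e ∈ G.edgeFinset, f e := by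
  rw [edgeSum, ← coe_edgeFinset, finsum_mem_coe_finset]

variable [DecidableEq V]

theorem vertexSum_eq_sum_incidenceFinset (v : V) :
    vertexSum G f v = ∑ e ∈ G.incidenceFinset v, f e := by
  rw [vertexSum, ← finsum_mem_coe_finset, incidenceFinset_eq_filter, coe_filter]
  simp only [mem_edgeFinset]

theorem sum_vertexSum : ∑ v, vertexSum G f v = 2 * edgeSum G f := by
  simp only [vertexSum_eq_sum_incidenceFinset, edgeSum_eq_sum_edgeFinset,
    incidenceFinset_eq_filter, Finset.sum_filter]
  rw [Finset.sum_comm, Finset.mul_sum]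
  refine Finset.sum_congr rfl fun e he => ?_
  induction e with | _ a b => ?_
  have hab : a ≠ b := (G.mem_edgeFinset.1 he).ne
  rw [← Finset.sum_filter, show univ.filter (· ∈ s(a, b)) = {a, b} by ext; simp,
    Finset.sum_pair hab, two_mul]

end Sums

section Signings

variable [Fintype V]

theorem isSignedSubmatching_card_iff {f : Sym2 V → ℤ} :
    IsSignedSubmatching G f (Fintype.card V) ↔
      (∀ e ∈ G.edgeSet, f e = 1 ∨ f e = -1) ∧ ∀ v, vertexSum G f v ≤ 1 := by
  refine and_congr_right fun _ => ⟨fun hcard => ?_, fun hall => ?_⟩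
  · by_contra hnot
    have hne : {v | vertexSum G f v ≤ 1} ≠ Set.univ := by
      simpa [Set.eq_univ_iff_forall] using hnot
    have := Set.ncard_lt_card hne
    rw [Nat.card_eq_fintype_card] at this
    omega
  · simp [hall, Set.ncard_univ, Nat.card_eq_fintype_card]

variable [DecidableRel G.Adj] {f : Sym2 V → ℤ}

theorem vertexSum_nonpos_of_le_one (hf : ∀ e ∈ G.edgeSet, f e = 1 ∨ f e = -1) {v : V}
    (heven : Even (G.degree v)) (hv : vertexSum G f v ≤ 1) : vertexSum G f v ≤ 0 := by
  classical
  have hpar := (G.incidenceFinset v).even_sum_sub_card fun e he =>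
    hf e (G.incidenceSet_subset v ((G.mem_incidenceFinset v e).1 he))
  rw [card_incidenceFinset_eq_degree, ← vertexSum_eq_sum_incidenceFinset,
    Int.even_sub, Int.even_coe_nat] at hpar
  obtain ⟨k, hk⟩ := hpar.2 heven
  omega

theorem edgeSum_nonpos (heven : ∀ v, Even (G.degree v))
    (hf : IsSignedSubmatching G f (Fintype.card V)) : edgeSum G f ≤ 0 := by
  classical
  obtain ⟨hpm, hle⟩ := isSignedSubmatching_card_iff.1 hf
  have := Finset.sum_nonpos fun v (_ : v ∈ univ) =>
    vertexSum_nonpos_of_le_one hpm (heven v) (hle v)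
  rw [sum_vertexSum] at this
  omega

theorem even_edgeSum_sub_ncard (hf : ∀ e ∈ G.edgeSet, f e = 1 ∨ f e = -1) :
    Even (edgeSum G f - G.edgeSet.ncard) := by
  rw [edgeSum_eq_sum_edgeFinset, ← coe_edgeFinset, Set.ncard_coe_finset]
  exact G.edgeFinset.even_sum_sub_card fun e he => hf e (G.mem_edgeFinset.1 he)

theorem Connected.exists_signing_vertexSum_nonpos (hconn : G.Connected)
    (heven : ∀ v, Even (G.degree v)) :
    ∃ f : Sym2 V → ℤ, (∀ e ∈ G.edgeSet, f e = 1 ∨ f e = -1) ∧ (∀ v, vertexSum G f v ≤ 0) ∧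
      2 * edgeSum G f = (-1) ^ G.edgeSet.ncard - 1 := by
  classical
  obtain ⟨u, p, hp⟩ := hconn.exists_isEulerian heven
  have hnodup := hp.isTrail.edges_nodup
  let f (e : Sym2 V) : ℤ := -(-1) ^ p.edges.idxOf e
  have hf (i : ℕ) (h : i < p.edges.length) : f p.edges[i] = -1 * (-1) ^ i := by
    simp [f, hnodup.idxOf_getElem]
  have hedges : G.edgeFinset = p.edges.toFinset := by ext e; simp [hp.mem_edges_iff]
  have hvertex (v : V) : vertexSum G f v = if v = u then (-1) ^ p.length - 1 else 0 := by
    rw [vertexSum_eq_sum_incidenceFinset, incidenceFinset_eq_filter, Finset.sum_filter, hedges,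
      List.sum_toFinset _ hnodup, p.sum_map_ite_mem_edges v (-1) hf]
    split_ifs <;> ring
  have hm : G.edgeSet.ncard = p.length := by
    rw [← coe_edgeFinset, Set.ncard_coe_finset, hedges, List.toFinset_card_of_nodup hnodup,
      p.length_edges]
  refine ⟨f, fun e _ => ?_, fun v => ?_, ?_⟩
  · rcases neg_one_pow_eq_or ℤ (p.edges.idxOf e) with h | h <;> simp [f, h]
  · rw [hvertex]
    rcases neg_one_pow_eq_or ℤ p.length with h | h <;> split_ifs <;> simp [h]
  · rw [← sum_vertexSum, hm]
    simp [hvertex]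

theorem Connected.isGreatest_signedSubmatching_edgeSum (hconn : G.Connected)
    (heven : ∀ v, Even (G.degree v)) :
    IsGreatest {s | ∃ f, IsSignedSubmatching G f (Fintype.card V) ∧ s = edgeSum G f}
      (if Even G.edgeSet.ncard then 0 else -1) := by
  constructor
  · obtain ⟨f, hpm, hle, hsum⟩ := hconn.exists_signing_vertexSum_nonpos heven
    refine ⟨f, isSignedSubmatching_card_iff.2 ⟨hpm, fun v => (hle v).trans zero_le_one⟩, ?_⟩
    split_ifs with h
    · rw [h.neg_one_pow] at hsum; omega
    · rw [(Nat.not_even_iff_odd.1 h).neg_one_pow] at hsum; omega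
  · rintro _ ⟨f, hf, rfl⟩
    have hnonpos := edgeSum_nonpos heven hf
    have hpar := even_edgeSum_sub_ncard hf.1
    split_ifs with h
    · exact hnonpos
    · rw [Int.even_sub, Int.even_coe_nat] at hpar
      obtain ⟨k, hk⟩ := Int.not_even_iff_odd.1 (hpar.not.2 h)
      omega

end Signings

end SimpleGraph

theorem eulerian_betaS [Fintype V] (G : SimpleGraph V) [DecidableRel G.Adj]
    (hconn : G.Connected) (heven : ∀ v, Even (G.degree v)) :
    (Even G.edgeSet.ncard → betaS G (Fintype.card V) = 0) ∧
    (Odd G.edgeSet.ncard → betaS G (Fintype.card V) = -1) := by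
  have hβ : betaS G (Fintype.card V) = if Even G.edgeSet.ncard then 0 else -1 :=
    (hconn.isGreatest_signedSubmatching_edgeSum heven).csSup_eq
  exact ⟨fun h => by rw [hβ, if_pos h], fun h => by rw [hβ, if_neg (Nat.not_even_iff_odd.2 h)]⟩
end

section
/- Let G be a simple graph, f a signed submatching of G, and let T be a good (−1,−1)-trail in G whose endpoints u and v are distinct and satisfy f(E_G(u)) ≤ −1 and f(E_G(v)) ≤ −1. Let g be obtained from f by negating f on every edge of T. Then g(E_G(x)) = f(E_G(x)) for all vertices x ∉ {u, v}, g(E_G(u)) = f(E_G(u)) + 2, g(E_G(v)) = f(E_G(v)) + 2, g is a signed submatching of G, and g(E(G)) = f(E(G)) + 2. -/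
open Finset

variable {V : Type*}

/-!
Consecutive edges of a good trail carry opposite signs, so every passage of the trail through a
vertex `x` contributes `0` to the sum of `f` over the trail edges at `x`; only the first edge (at
`u`) and the last edge (at `v`) are left over. Negating `f` on the trail therefore raises `f(E_G(u))` and
`f(E_G(v))` by `2` and leaves the other vertex sums alone. For the same reason the values of `f`
along the trail add up to `(f e₁ + f e_m) / 2 = -1`, so the total rises by `2`. As
`f(E_G(u)), f(E_G(v)) ≤ -1`, every vertex sum stays at most `1`.
-/

theorem List.two_nsmul_sum_map_of_isChain_neg {α M : Type*} [AddCommGroup M] (f : α → M) :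
    ∀ (l : List α) (hne : l ≠ []), l.IsChain (fun a b => f b = -f a) →
      2 • (l.map f).sum = f (l.head hne) + f (l.getLast hne)
  | [a], _, _ => by simp [two_nsmul]
  | a :: b :: l, _, hch => by
    rw [List.isChain_cons_cons] at hch
    have ih := two_nsmul_sum_map_of_isChain_neg f (b :: l) (List.cons_ne_nil _ _) hch.2
    rw [List.head_cons] at ih
    rw [List.map_cons, List.sum_cons, smul_add, ih, List.head_cons, List.getLast_cons_cons, hch.1]
    abel

theorem List.Nodup.finsum_mem_eq_sum_map {α M : Type*} [AddCommMonoid M] {l : List α}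
    (hl : l.Nodup) (f : α → M) : ∑ᶠ e ∈ {e | e ∈ l}, f e = (l.map f).sum := by
  classical
  rw [← List.coe_toFinset, finsum_mem_coe_finset, List.sum_toFinset _ hl]

theorem finsum_mem_ite_neg {α M : Type*} [AddCommGroup M] {s : Set α} (hs : s.Finite)
    (p : α → Prop) [DecidablePred p] (f : α → M) :
    ∑ᶠ e ∈ s, (if p e then -f e else f e) = ∑ᶠ e ∈ s, f e - 2 • ∑ᶠ e ∈ s ∩ {e | p e}, f e := by
  rw [← finsum_mem_inter_add_sdiff {e | p e} hs,
    ← finsum_mem_inter_add_sdiff (f := f) {e | p e} hs,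
    finsum_mem_congr rfl (fun e he => if_pos he.2), finsum_mem_congr rfl (fun e he => if_neg he.2),
    finsum_mem_neg_distrib _ (hs.inter_of_left _)]
  abel

namespace SimpleGraph.Walk

variable [DecidableEq V] {G : SimpleGraph V} (f : Sym2 V → ℤ) {u v : V}

theorem sum_map_filter_mem_of_isChain_neg (W : G.Walk u v) (hne : W.edges ≠ [])
    (hch : W.edges.IsChain (fun a b => f b = -f a)) (x : V) :
    ((W.edges.filter (x ∈ ·)).map f).sum =
      (if x = u then f (W.edges.head hne) else 0) +
        (if x = v then f (W.edges.getLast hne) else 0) := by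
  induction W with
  | nil => simp at hne
  | @cons u w v h p ih =>
    have huw : u ≠ w := h.ne
    cases p with
    | nil => by_cases x = u <;> by_cases x = w <;> simp_all
    | cons _ p =>
      simp only [edges_cons, List.isChain_cons_cons] at hch ih ⊢
      have := ih (List.cons_ne_nil _ _) hch.2
      rw [List.filter_cons, List.head_cons, List.getLast_cons (List.cons_ne_nil _ _)]
      by_cases x = u <;> by_cases x = w <;> simp_all

variable [Finite V] {W : G.Walk u v}

theorem vertexSum_ite_neg (hT : W.IsTrail) (hne : W.edges ≠ [])
    (hch : W.edges.IsChain (fun a b => f b = -f a)) (x : V) :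
    vertexSum G (fun e => if e ∈ W.edges then -f e else f e) x =
      vertexSum G f x - 2 * ((if x = u then f (W.edges.head hne) else 0) +
        (if x = v then f (W.edges.getLast hne) else 0)) := by
  have hinter :
      {e ∈ G.edgeSet | x ∈ e} ∩ {e | e ∈ W.edges} = {e | e ∈ W.edges.filter (x ∈ ·)} := by
    ext e
    simp only [Set.mem_inter_iff, Set.mem_ofPred_eq, List.mem_filter, decide_eq_true_eq]
    exact ⟨fun ⟨⟨_, hx⟩, he⟩ => ⟨he, hx⟩, fun ⟨he, hx⟩ => ⟨⟨W.edges_subset_edgeSet he, hx⟩, he⟩⟩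
  rw [vertexSum, vertexSum, finsum_mem_ite_neg (Set.toFinite _), hinter,
    (hT.edges_nodup.filter _).finsum_mem_eq_sum_map, sum_map_filter_mem_of_isChain_neg f W hne hch,
    two_nsmul, two_mul]

theorem edgeSum_ite_neg (hT : W.IsTrail) (hne : W.edges ≠ [])
    (hch : W.edges.IsChain (fun a b => f b = -f a)) :
    edgeSum G (fun e => if e ∈ W.edges then -f e else f e) =
      edgeSum G f - (f (W.edges.head hne) + f (W.edges.getLast hne)) := by
  have hinter : G.edgeSet ∩ {e | e ∈ W.edges} = {e | e ∈ W.edges} :=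
    Set.inter_eq_right.mpr fun _ he => W.edges_subset_edgeSet he
  rw [edgeSum, edgeSum, finsum_mem_ite_neg (Set.toFinite _), hinter,
    hT.edges_nodup.finsum_mem_eq_sum_map, List.two_nsmul_sum_map_of_isChain_neg f _ hne hch]

end SimpleGraph.Walk

theorem switch_good_trail [Fintype V] [DecidableEq V] (G : SimpleGraph V)
    (f : Sym2 V → ℤ) (hf : IsSignedSubmatching G f (Fintype.card V))
    (hall : ∀ x, vertexSum G f x ≤ 1)
    (u v : V) (huv : u ≠ v) (W : G.Walk u v) (hT : W.IsTrail)
    (hchain : List.Chain' (fun a b => f b = - f a) W.edges)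
    (hne : W.edges ≠ [])
    (hhead : f (W.edges.head hne) = -1) (hlast : f (W.edges.getLast hne) = -1)
    (hu : vertexSum G f u ≤ -1) (hv : vertexSum G f v ≤ -1)
    (g : Sym2 V → ℤ) (hg : ∀ e, g e = if e ∈ W.edges then - f e else f e) :
    (∀ x, x ≠ u → x ≠ v → vertexSum G g x = vertexSum G f x) ∧
    vertexSum G g u = vertexSum G f u + 2 ∧
    vertexSum G g v = vertexSum G f v + 2 ∧
    IsSignedSubmatching G g (Fintype.card V) ∧
    edgeSum G g = edgeSum G f + 2 := by
  have hvertex x : vertexSum G g x =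
      vertexSum G f x - 2 * ((if x = u then -1 else 0) + (if x = v then -1 else 0)) := by
    rw [funext hg, W.vertexSum_ite_neg f hT hne hchain x, hhead, hlast]
  have hle x : vertexSum G g x ≤ 1 := by
    rw [hvertex]
    split_ifs with hxu hxv hxv
    · exact absurd (hxu.symm.trans hxv) huv
    all_goals subst_vars; linarith [hall x]
  have hall_le : {x | vertexSum G g x ≤ 1} = Set.univ := Set.eq_univ_of_forall hle
  refine ⟨fun x hxu hxv => by simp [hvertex, hxu, hxv], by simp [hvertex, huv],
    by simp [hvertex, huv.symm], ⟨fun e he => ?_, ?_⟩, ?_⟩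
  · rcases hf.1 e he with h | h <;> rw [hg] <;> split_ifs <;> simp [h]
  · rw [hall_le, Set.ncard_univ, Nat.card_eq_fintype_card]
  · rw [funext hg, W.edgeSum_ite_neg f hT hne hchain, hhead, hlast]
    ring
end

section
/- Let G be a connected simple graph which is not a tree, let C be a cycle in G, v ∈ V(C) with d(v) ≥ 3, u, w ∈ N(v) ∩ V(C), and x ∈ N(v) \ {u, w}. Let G' be obtained from G by deleting edges vw and vx, adding a new vertex v', and adding edges v'x and v'w. Then G' is connected and |E(G')| − |V(G')| = |E(G)| − |V(G)| − 1. -/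
variable {V : Type*}

/-- The graph obtained from `G` by deleting edges `vw, vx`, adding a new vertex `v'`
and joining it to `w` and `x`. -/
def splitGraph (G : SimpleGraph V) (v w x : V) : SimpleGraph (V ⊕ Unit) :=
  SimpleGraph.fromEdgeSet
    ((Sym2.map Sum.inl '' G.edgeSet \ {s(Sum.inl v, Sum.inl w), s(Sum.inl v, Sum.inl x)}) ∪
      {s(Sum.inr (), Sum.inl w), s(Sum.inr (), Sum.inl x)})

/-!
Removing `vw` and `vx` does not separate `v` from `w`: `v` reaches `u` directly and `u` reaches
`w` along the arc of the cycle that avoids `v`. The new vertex `v'` is adjacent to `w` and `x`,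
so `v, w, x, v'` lie in one component of `G'`, which therefore contains both ends of every edge
of `G`, hence all of `G'` since `G` is connected. Two edges are removed, two are added and one
vertex is added.
-/

lemma Sym2.map_inl_ne_mk_inr {α β : Type*} (e : Sym2 α) (b : β) (y : α ⊕ β) :
    Sym2.map Sum.inl e ≠ s(Sum.inr b, y) := by
  induction e using Sym2.ind
  simp

namespace SimpleGraph

variable {W : Type*} {G : SimpleGraph V}

lemma Reachable.lift {H : SimpleGraph W} (f : V → W)
    (hf : ∀ a b, G.Adj a b → H.Reachable (f a) (f b)) {a b : V} (hab : G.Reachable a b) :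
    H.Reachable (f a) (f b) := by
  rw [reachable_iff_reflTransGen] at hab ⊢
  exact Relation.ReflTransGen.lift' f
    (fun a b h ↦ (reachable_iff_reflTransGen _ _).mp (hf a b h)) _ _ hab

namespace Walk

lemma IsCycle.exists_walk_notMem_support {v u w : V} {c : G.Walk v v} (hc : c.IsCycle)
    (hu : u ∈ c.support) (hw : w ∈ c.support) (huv : u ≠ v) (hwv : w ≠ v) :
    ∃ q : G.Walk u w, v ∉ q.support := by
  classical
  have mem_tail {y : V} (hy : y ∈ c.support) (hyv : y ≠ v) : y ∈ c.tail.support := by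
    rw [← cons_support_tail hc.not_nil] at hy
    exact (List.mem_cons.mp hy).resolve_left hyv
  have hu' := mem_tail hu huv
  have hw' := mem_tail hw hwv
  refine ⟨(c.tail.takeUntil u hu').reverse.append (c.tail.takeUntil w hw'), ?_⟩
  rw [support_append, support_reverse, List.mem_append, List.mem_reverse, not_or]
  exact ⟨endpoint_notMem_support_takeUntil hc.isPath_tail hu' huv.symm,
    fun h ↦ endpoint_notMem_support_takeUntil hc.isPath_tail hw' hwv.symm (List.mem_of_mem_tail h)⟩

lemma reachable_deleteEdges_of_notMem_support {v a b : V} {s : Set (Sym2 V)} (hs : ∀ e ∈ s, v ∈ e)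
    (q : G.Walk a b) (hq : v ∉ q.support) : (G.deleteEdges s).Reachable a b :=
  ⟨q.toDeleteEdges s fun e he hes ↦ hq (mem_support_of_mem_edges he (hs e hes))⟩

end Walk

end SimpleGraph

open SimpleGraph

variable {G : SimpleGraph V} {v w x : V}

lemma splitGraph_edgeSet : (splitGraph G v w x).edgeSet =
    (Sym2.map Sum.inl '' G.edgeSet \ {s(Sum.inl v, Sum.inl w), s(Sum.inl v, Sum.inl x)}) ∪
      {s(Sum.inr (), Sum.inl w), s(Sum.inr (), Sum.inl x)} := by
  rw [splitGraph, edgeSet_fromEdgeSet, sdiff_eq_left, Set.disjoint_left]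
  rintro e (⟨⟨e', he', rfl⟩, -⟩ | (rfl | rfl)) hdiag
  · exact not_isDiag_of_mem_edgeSet _ he' ((Sym2.isDiag_map Sum.inl_injective).mp hdiag)
  all_goals simp at hdiag

lemma splitGraph_adj_inl_inl {a b : V} :
    (splitGraph G v w x).Adj (.inl a) (.inl b) ↔ (G.deleteEdges {s(v, w), s(v, x)}).Adj a b := by
  have hmap : s(Sum.inl a, Sum.inl b) = Sym2.map (Sum.inl : V → V ⊕ Unit) s(a, b) := rfl
  rw [← mem_edgeSet, splitGraph_edgeSet, hmap, Set.mem_union, Set.mem_sdiff,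
    (Sym2.map.injective Sum.inl_injective).mem_set_image]
  simp

lemma splitGraph_adj_inr_inl {a : V} :
    (splitGraph G v w x).Adj (.inr ()) (.inl a) ↔ a = w ∨ a = x := by
  rw [← mem_edgeSet, splitGraph_edgeSet]
  simp [Sym2.map_inl_ne_mk_inr]

def splitGraphInl (G : SimpleGraph V) (v w x : V) :
    G.deleteEdges {s(v, w), s(v, x)} →g splitGraph G v w x where
  toFun := Sum.inl
  map_rel' := splitGraph_adj_inl_inl.mpr

lemma splitGraph_connected (hG : G.Connected)
    (hvw : (G.deleteEdges {s(v, w), s(v, x)}).Reachable v w) : (splitGraph G v w x).Connected := by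
  set H := splitGraph G v w x
  have hw : H.Reachable (.inr ()) (.inl w) := (splitGraph_adj_inr_inl.mpr (.inl rfl)).reachable
  have hx : H.Reachable (.inr ()) (.inl x) := (splitGraph_adj_inr_inl.mpr (.inr rfl)).reachable
  have hv : H.Reachable (.inr ()) (.inl v) := hw.trans (hvw.map (splitGraphInl G v w x)).symm
  have hvwx {y : V} (hy : y = v ∨ y = w ∨ y = x) : H.Reachable (.inr ()) (.inl y) := by
    rcases hy with rfl | rfl | rfl <;> assumption
  have hadj (a b : V) (hab : G.Adj a b) : H.Reachable (.inl a) (.inl b) := by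
    by_cases hd : s(a, b) ∈ ({s(v, w), s(v, x)} : Set (Sym2 V))
    · have hends : (a = v ∨ a = w ∨ a = x) ∧ (b = v ∨ b = w ∨ b = x) := by
        rcases hd with hd | hd <;> rcases Sym2.eq_iff.mp hd with ⟨rfl, rfl⟩ | ⟨rfl, rfl⟩ <;> simp
      exact (hvwx hends.1).symm.trans (hvwx hends.2)
    · exact (splitGraph_adj_inl_inl.mpr (deleteEdges_adj.mpr ⟨hab, hd⟩)).reachable
  have hinr : ∀ y, H.Reachable (.inr ()) y := by
    rintro (y | ⟨⟩)
    · exact hv.trans ((hG.preconnected v y).lift Sum.inl hadj)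
    · rfl
  have : Nonempty (V ⊕ Unit) := ⟨.inr ()⟩
  exact ⟨fun a b ↦ (hinr a).symm.trans (hinr b)⟩

lemma ncard_edgeSet_splitGraph [Finite V] (hw : G.Adj v w) (hx : G.Adj v x) (hxw : x ≠ w) :
    (splitGraph G v w x).edgeSet.ncard = G.edgeSet.ncard := by
  set A : Set (Sym2 (V ⊕ Unit)) := Sym2.map Sum.inl '' G.edgeSet
  set D : Set (Sym2 (V ⊕ Unit)) := {s(Sum.inl v, Sum.inl w), s(Sum.inl v, Sum.inl x)}
  set B : Set (Sym2 (V ⊕ Unit)) := {s(Sum.inr (), Sum.inl w), s(Sum.inr (), Sum.inl x)}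
  have hDA : D ⊆ A := by
    rintro e (rfl | rfl)
    · exact ⟨s(v, w), hw, rfl⟩
    · exact ⟨s(v, x), hx, rfl⟩
  have hD : D.ncard = 2 := Set.ncard_pair (by simp [hxw.symm, hw.ne'])
  have hB : B.ncard = 2 := Set.ncard_pair (by simp [hxw.symm])
  have hA : A.ncard = G.edgeSet.ncard :=
    Set.ncard_image_of_injective _ (Sym2.map.injective Sum.inl_injective)
  have hdisj : Disjoint (A \ D) B := by
    rw [Set.disjoint_right]
    rintro e (rfl | rfl) ⟨⟨e', -, he⟩, -⟩ <;> exact Sym2.map_inl_ne_mk_inr _ _ _ he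
  have h2 : 2 ≤ A.ncard := hD ▸ Set.ncard_le_ncard hDA
  rw [splitGraph_edgeSet, Set.ncard_union_eq hdisj, Set.ncard_sdiff hDA, hD, hB, ← hA]
  omega

theorem splitGraph_connected_and_count_general [Fintype V]
    (G : SimpleGraph V)
    (hconn : G.Connected)
    (v : V) (c : G.Walk v v) (hc : c.IsCycle)
    (u w : V) (hu : G.Adj v u) (hw : G.Adj v w)
    (huc : u ∈ c.support) (hwc : w ∈ c.support) (huw : u ≠ w)
    (x : V) (hx : G.Adj v x) (hxu : x ≠ u) (hxw : x ≠ w) :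
    (splitGraph G v w x).Connected ∧
    ((splitGraph G v w x).edgeSet.ncard : ℤ) - Nat.card (V ⊕ Unit)
      = (G.edgeSet.ncard : ℤ) - Nat.card V - 1 := by
  refine ⟨splitGraph_connected hconn ?_, ?_⟩
  · obtain ⟨q, hq⟩ := hc.exists_walk_notMem_support huc hwc hu.ne' hw.ne'
    have hvu : (G.deleteEdges {s(v, w), s(v, x)}).Adj v u := by
      simpa [huw, hxu.symm, hu.ne'] using hu
    exact hvu.reachable.trans (q.reachable_deleteEdges_of_notMem_support (by simp) hq)
  · rw [ncard_edgeSet_splitGraph hw hx hxw, Nat.card_sum, Nat.card_unique (α := Unit)]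
    push_cast
    ring

theorem splitGraph_connected_and_count [Fintype V]
    (G : SimpleGraph V) [DecidableRel G.Adj]
    (hconn : G.Connected) (hnt : ¬ G.IsAcyclic)
    (v : V) (c : G.Walk v v) (hc : c.IsCycle) (hdeg : 3 ≤ G.degree v)
    (u w : V) (hu : G.Adj v u) (hw : G.Adj v w)
    (huc : u ∈ c.support) (hwc : w ∈ c.support) (huw : u ≠ w)
    (x : V) (hx : G.Adj v x) (hxu : x ≠ u) (hxw : x ≠ w) :
    (splitGraph G v w x).Connected ∧
    ((splitGraph G v w x).edgeSet.ncard : ℤ) - Nat.card (V ⊕ Unit)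
      = (G.edgeSet.ncard : ℤ) - Nat.card V - 1 :=
  splitGraph_connected_and_count_general G hconn v c hc u w hu hw huc hwc huw x hx hxu hxw
end

section
/- With G, G', v, v', w, x as in the cycle-splitting construction (G' obtained from G by replacing edges vw, vx with v'w, v'x for a new vertex v'), for every positive integer k ≤ |V(G)| we have β_S^k(G) ≥ β_S^{k+1}(G'). -/
open Finset

variable {V : Type*}

/-! The edge map `E(G) → E(G')` sending `vw, vx` to `v'w, v'x` and fixing all other edges is
a bijection, so pulling a signed submatching `f` of `G'` back along it preserves the total
weight and the weight at every vertex other than `v`, while `v` receives the weights of both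
`v` and `v'`. Since `f(E(v'))` is a sum of two signs, `f(E(v')) ≤ 1` forces `f(E(v')) ≤ 0`;
so if `v` and `v'` are both good in `G'` then `v` is good in `G`, and at most one good
vertex is lost. -/

open Classical in
noncomputable def splitEdge (v w x : V) (e : Sym2 V) : Sym2 (V ⊕ Unit) :=
  if e = s(v, w) then s(Sum.inr (), Sum.inl w)
  else if e = s(v, x) then s(Sum.inr (), Sum.inl x)
  else e.map Sum.inl

section SplitEdge

variable {v w x : V}

lemma splitEdge_of_ne {e : Sym2 V} (hw : e ≠ s(v, w)) (hx : e ≠ s(v, x)) :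
    splitEdge v w x e = e.map Sum.inl := by
  simp [splitEdge, hw, hx]

lemma splitEdge_left : splitEdge v w x s(v, w) = s(Sum.inr (), Sum.inl w) := by
  simp [splitEdge]

lemma splitEdge_right : splitEdge v w x s(v, x) = s(Sum.inr (), Sum.inl x) := by
  by_cases h : s(v, x) = s(v, w)
  · rw [h, splitEdge_left, (Sym2.congr_right.mp h)]
  · simp [splitEdge, h]

lemma inr_mem_splitEdge_iff {e : Sym2 V} :
    Sum.inr () ∈ splitEdge v w x e ↔ e = s(v, w) ∨ e = s(v, x) := by
  by_cases hw : e = s(v, w)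
  · simp [hw, splitEdge_left]
  by_cases hx : e = s(v, x)
  · simp [hx, splitEdge_right]
  simp [splitEdge_of_ne hw hx, hw, hx]

lemma inl_mem_splitEdge_iff_of_ne {a : V} (hav : a ≠ v) {e : Sym2 V} :
    Sum.inl a ∈ splitEdge v w x e ↔ a ∈ e := by
  by_cases hw : e = s(v, w)
  · simp [hw, splitEdge_left, hav]
  by_cases hx : e = s(v, x)
  · simp [hx, splitEdge_right, hav]
  simp [splitEdge_of_ne hw hx, Sym2.mem_map]

lemma inl_mem_splitEdge_self_iff (hvw : v ≠ w) (hvx : v ≠ x) {e : Sym2 V} :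
    Sum.inl v ∈ splitEdge v w x e ↔ v ∈ e ∧ ¬(e = s(v, w) ∨ e = s(v, x)) := by
  by_cases hw : e = s(v, w)
  · simp [hw, splitEdge_left, hvw]
  by_cases hx : e = s(v, x)
  · simp [hx, splitEdge_right, hvx]
  simp [splitEdge_of_ne hw hx, Sym2.mem_map, hw, hx]

lemma splitEdge_injective (hxw : x ≠ w) : Function.Injective (splitEdge v w x) := by
  intro e e' h
  have hinr := congrArg (Sum.inr () ∈ ·) h
  simp only [inr_mem_splitEdge_iff] at hinr
  by_cases he : e = s(v, w) ∨ e = s(v, x)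
  · have he' := hinr.mp he
    rcases he with rfl | rfl <;> rcases he' with rfl | rfl <;>
      simp_all [splitEdge_left, splitEdge_right]
  · have he' := mt hinr.mpr he
    simp only [not_or] at he he'
    rw [splitEdge_of_ne he.1 he.2, splitEdge_of_ne he'.1 he'.2] at h
    exact Sym2.map.injective Sum.inl_injective h

lemma splitGraph_edgeSet_s12 {G : SimpleGraph V} (hw : G.Adj v w) (hx : G.Adj v x) :
    (splitGraph G v w x).edgeSet = splitEdge v w x '' G.edgeSet := by
  have hsplit : G.edgeSet = (G.edgeSet \ {s(v, w), s(v, x)}) ∪ {s(v, w), s(v, x)} :=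
    (Set.sdiff_union_of_subset
      (Set.pair_subset (G.mem_edgeSet.2 hw) (G.mem_edgeSet.2 hx))).symm
  have hold : splitEdge v w x '' (G.edgeSet \ {s(v, w), s(v, x)}) =
      Sym2.map Sum.inl '' G.edgeSet \ {s(Sum.inl v, Sum.inl w), s(Sum.inl v, Sum.inl x)} := by
    rw [Set.image_congr fun e he => splitEdge_of_ne (fun h => he.2 (.inl h))
      (fun h => he.2 (.inr h)), Set.image_sdiff (Sym2.map.injective Sum.inl_injective),
      Set.image_pair, Sym2.map_mk, Sym2.map_mk]
  conv_rhs => rw [hsplit, Set.image_union, hold, Set.image_pair, splitEdge_left, splitEdge_right]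
  rw [splitGraph, SimpleGraph.edgeSet_fromEdgeSet, _root_.sdiff_eq_self_iff_disjoint,
    Set.disjoint_right]
  rintro e (⟨⟨e, he, rfl⟩, -⟩ | he)
  · rw [Sym2.mem_diagSet, Sym2.isDiag_map Sum.inl_injective]
    exact G.not_isDiag_of_mem_edgeSet he
  · rcases he with rfl | rfl <;> simp

end SplitEdge

section SplitSums

variable {G : SimpleGraph V} {v w x : V}

lemma edgeSum_splitGraph (hw : G.Adj v w) (hx : G.Adj v x) (hxw : x ≠ w)
    (f : Sym2 (V ⊕ Unit) → ℤ) :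
    edgeSum (splitGraph G v w x) f = edgeSum G (f ∘ splitEdge v w x) := by
  rw [edgeSum, splitGraph_edgeSet_s12 hw hx, finsum_mem_image (splitEdge_injective hxw).injOn]
  rfl

lemma vertexSum_splitGraph (hw : G.Adj v w) (hx : G.Adj v x) (hxw : x ≠ w)
    (f : Sym2 (V ⊕ Unit) → ℤ) (b : V ⊕ Unit) :
    vertexSum (splitGraph G v w x) f b =
      ∑ᶠ e ∈ {e ∈ G.edgeSet | b ∈ splitEdge v w x e}, f (splitEdge v w x e) := by
  change ∑ᶠ e ∈ (splitGraph G v w x).edgeSet ∩ {e | b ∈ e}, f e = _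
  rw [splitGraph_edgeSet_s12 hw hx, ← Set.image_inter_preimage,
    finsum_mem_image (splitEdge_injective hxw).injOn]
  rfl

lemma vertexSum_splitGraph_inl_of_ne (hw : G.Adj v w) (hx : G.Adj v x) (hxw : x ≠ w)
    (f : Sym2 (V ⊕ Unit) → ℤ) {a : V} (hav : a ≠ v) :
    vertexSum (splitGraph G v w x) f (Sum.inl a) = vertexSum G (f ∘ splitEdge v w x) a := by
  simp only [vertexSum_splitGraph hw hx hxw, inl_mem_splitEdge_iff_of_ne hav]
  rfl

lemma vertexSum_splitGraph_inr (hw : G.Adj v w) (hx : G.Adj v x) (hxw : x ≠ w)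
    (f : Sym2 (V ⊕ Unit) → ℤ) :
    vertexSum (splitGraph G v w x) f (Sum.inr ()) =
      f (splitEdge v w x s(v, w)) + f (splitEdge v w x s(v, x)) := by
  have hinc : {e ∈ G.edgeSet | Sum.inr () ∈ splitEdge v w x e} = {s(v, w), s(v, x)} := by
    ext e
    simp only [inr_mem_splitEdge_iff, Set.mem_ofPred_eq, Set.mem_insert_iff,
      Set.mem_singleton_iff, and_iff_right_iff_imp]
    rintro (rfl | rfl)
    exacts [hw, hx]
  rw [vertexSum_splitGraph hw hx hxw, hinc, finsum_mem_pair (by simp [hxw.symm, hw.ne'])]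

lemma vertexSum_comp_splitEdge_self [Finite V] (hw : G.Adj v w) (hx : G.Adj v x) (hxw : x ≠ w)
    (f : Sym2 (V ⊕ Unit) → ℤ) :
    vertexSum G (f ∘ splitEdge v w x) v =
      vertexSum (splitGraph G v w x) f (Sum.inl v) +
        vertexSum (splitGraph G v w x) f (Sum.inr ()) := by
  have hinc : {e ∈ G.edgeSet | v ∈ e} =
      {e ∈ G.edgeSet | Sum.inl v ∈ splitEdge v w x e} ∪
        {e ∈ G.edgeSet | Sum.inr () ∈ splitEdge v w x e} := by
    ext e
    simp only [inl_mem_splitEdge_self_iff hw.ne hx.ne, inr_mem_splitEdge_iff, Set.mem_union,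
      Set.mem_ofPred_eq]
    constructor
    · tauto
    · rintro (⟨he, hv, -⟩ | ⟨he, rfl | rfl⟩) <;> simp_all
  rw [vertexSum_splitGraph hw hx hxw, vertexSum_splitGraph hw hx hxw, vertexSum, hinc,
    finsum_mem_union _ (Set.toFinite _) (Set.toFinite _)]
  · rfl
  · rw [Set.disjoint_left]
    rintro e ⟨-, he⟩ ⟨-, he'⟩
    rw [inl_mem_splitEdge_self_iff hw.ne hx.ne] at he
    rw [inr_mem_splitEdge_iff] at he'
    exact he.2 he'

lemma vertexSum_comp_splitEdge_self_le_one [Finite V] (hw : G.Adj v w) (hx : G.Adj v x)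
    (hxw : x ≠ w) {f : Sym2 (V ⊕ Unit) → ℤ}
    (hpm : ∀ e ∈ G.edgeSet, f (splitEdge v w x e) = 1 ∨ f (splitEdge v w x e) = -1)
    (hv : vertexSum (splitGraph G v w x) f (Sum.inl v) ≤ 1)
    (hr : vertexSum (splitGraph G v w x) f (Sum.inr ()) ≤ 1) :
    vertexSum G (f ∘ splitEdge v w x) v ≤ 1 := by
  have hr0 : vertexSum (splitGraph G v w x) f (Sum.inr ()) ≤ 0 := by
    rw [vertexSum_splitGraph_inr hw hx hxw] at hr ⊢
    rcases hpm _ (G.mem_edgeSet.2 hw) with h₁ | h₁ <;>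
      rcases hpm _ (G.mem_edgeSet.2 hx) with h₂ | h₂ <;> omega
  rw [vertexSum_comp_splitEdge_self hw hx hxw]
  exact add_le_of_le_of_nonpos hv hr0

end SplitSums

lemma ncard_le_ncard_add_one_of_merge [Finite V] {s : Set (V ⊕ Unit)} {t : Set V} (v : V)
    (hne : ∀ a, a ≠ v → Sum.inl a ∈ s → a ∈ t)
    (hv : Sum.inl v ∈ s → Sum.inr () ∈ s → v ∈ t) :
    s.ncard ≤ t.ncard + 1 := by
  obtain ⟨p, hp⟩ : ∃ p, s ⊆ insert p (Sum.inl '' t) := by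
    by_cases hr : Sum.inr () ∈ s
    · refine ⟨Sum.inr (), ?_⟩
      rintro (a | ⟨⟩) ha
      · refine .inr ⟨a, ?_, rfl⟩
        by_cases hav : a = v
        · exact hav ▸ hv (hav ▸ ha) hr
        · exact hne a hav ha
      · exact .inl rfl
    · refine ⟨Sum.inl v, ?_⟩
      rintro (a | ⟨⟩) ha
      · by_cases hav : a = v
        · exact .inl (hav ▸ rfl)
        · exact .inr ⟨a, hne a hav ha, rfl⟩
      · exact absurd ha hr
  calc s.ncard ≤ (insert p (Sum.inl '' t)).ncard := Set.ncard_le_ncard hp (Set.toFinite _)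
    _ ≤ (Sum.inl '' t).ncard + 1 := Set.ncard_insert_le _ _
    _ = t.ncard + 1 := by rw [Set.ncard_image_of_injective _ Sum.inl_injective]

lemma IsSignedSubmatching.comp_splitEdge [Finite V] {G : SimpleGraph V} {v w x : V}
    (hw : G.Adj v w) (hx : G.Adj v x) (hxw : x ≠ w) {f : Sym2 (V ⊕ Unit) → ℤ} {k : ℕ}
    (hf : IsSignedSubmatching (splitGraph G v w x) f (k + 1)) :
    IsSignedSubmatching G (f ∘ splitEdge v w x) k := by
  have hpm : ∀ e ∈ G.edgeSet, f (splitEdge v w x e) = 1 ∨ f (splitEdge v w x e) = -1 :=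
    fun e he => hf.1 _ (splitGraph_edgeSet_s12 hw hx ▸ Set.mem_image_of_mem _ he)
  refine ⟨hpm, ?_⟩
  have hgood := ncard_le_ncard_add_one_of_merge
    (s := {b | vertexSum (splitGraph G v w x) f b ≤ 1})
    (t := {a | vertexSum G (f ∘ splitEdge v w x) a ≤ 1}) v
    (fun a hav ha => (vertexSum_splitGraph_inl_of_ne hw hx hxw f hav).symm.trans_le ha)
    (vertexSum_comp_splitEdge_self_le_one hw hx hxw hpm)
  linarith [hf.2]

lemma isSignedSubmatching_neg_one {W : Type*} [Finite W] (H : SimpleGraph W) {k : ℕ}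
    (hk : k ≤ Nat.card W) : IsSignedSubmatching H (fun _ => -1) k := by
  refine ⟨fun _ _ => .inr rfl, ?_⟩
  have hall : ∀ a, vertexSum H (fun _ => -1) a ≤ 1 := fun a => by
    rw [vertexSum, finsum_mem_eq_finite_toFinset_sum _ (Set.toFinite _), Finset.sum_const,
      nsmul_eq_mul, mul_neg_one]
    omega
  simpa [hall] using hk

lemma edgeSum_le_ncard [Finite V] {G : SimpleGraph V} {f : Sym2 V → ℤ}
    (hf : ∀ e ∈ G.edgeSet, f e ≤ 1) : edgeSum G f ≤ G.edgeSet.ncard := by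
  rw [edgeSum, finsum_mem_eq_finite_toFinset_sum _ (Set.toFinite _),
    Set.ncard_eq_toFinset_card _ (Set.toFinite _)]
  simpa using Finset.sum_le_card_nsmul _ _ 1 fun e he => hf e ((Set.Finite.mem_toFinset _).mp he)

lemma betaS_le_betaS_of_forall_exists {W : Type*} [Finite V] {G : SimpleGraph V}
    {H : SimpleGraph W} {k l : ℕ} (hH : ∃ f, IsSignedSubmatching H f l)
    (hHG : ∀ f, IsSignedSubmatching H f l →
      ∃ g, IsSignedSubmatching G g k ∧ edgeSum G g = edgeSum H f) :
    betaS H l ≤ betaS G k := by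
  obtain ⟨f₀, hf₀⟩ := hH
  refine csSup_le ⟨_, f₀, hf₀, rfl⟩ ?_
  rintro _ ⟨f, hf, rfl⟩
  obtain ⟨g, hg, hgf⟩ := hHG f hf
  refine le_csSup ⟨G.edgeSet.ncard, ?_⟩ ⟨g, hg, hgf.symm⟩
  rintro _ ⟨g, hg, rfl⟩
  exact edgeSum_le_ncard fun e he => (hg.1 e he).elim le_of_eq fun h => by omega

theorem betaS_splitGraph_general [Fintype V] (G : SimpleGraph V)
    (v : V)
    (w : V) (hw : G.Adj v w)
    (x : V) (hx : G.Adj v x) (hxw : x ≠ w)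
    (k : ℕ) (hk : k ≤ Fintype.card V) :
    betaS (splitGraph G v w x) (k + 1) ≤ betaS G k := by
  refine betaS_le_betaS_of_forall_exists ⟨_, isSignedSubmatching_neg_one _ ?_⟩
    fun f hf => ⟨_, hf.comp_splitEdge hw hx hxw, (edgeSum_splitGraph hw hx hxw f).symm⟩
  rw [Nat.card_sum, Nat.card_eq_fintype_card, Nat.card_of_subsingleton ()]
  omega

theorem betaS_splitGraph [Fintype V] (G : SimpleGraph V) [DecidableRel G.Adj]
    (hconn : G.Connected) (hnt : ¬ G.IsAcyclic)
    (v : V) (c : G.Walk v v) (hc : c.IsCycle) (hdeg : 3 ≤ G.degree v)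
    (u w : V) (hu : G.Adj v u) (hw : G.Adj v w)
    (huc : u ∈ c.support) (hwc : w ∈ c.support) (huw : u ≠ w)
    (x : V) (hx : G.Adj v x) (hxu : x ≠ u) (hxw : x ≠ w)
    (k : ℕ) (hk1 : 1 ≤ k) (hk : k ≤ Fintype.card V) :
    betaS (splitGraph G v w x) (k + 1) ≤ betaS G k :=
  betaS_splitGraph_general G v w hw x hx hxw k hk
end
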